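/- arXiv:math/0607398 — 5 statements merged into one kernel-verified Lean document; each statement's English description precedes it below -/
import Mathlib

section
/- Let $X_1, \dots, X_N$ be independent nonnegative real random variables such that each $X_i$ has a density bounded by $A x^{-\alpha}$ for some $A > 0$ and $0 \le \alpha < 1$. Then for every $\varepsilon > 0$, $\mathbb{P}\{X_1 + \dots + X_N \le N\varepsilon\} \le [C(A,\alpha)\varepsilon]^{(1-\alpha)N}$, where $C(A,\alpha) = \frac{e}{1-\alpha}[A\Gamma(1-\alpha)]^{1/(1-\alpha)}$. -/
/-!
Chernoff's bound for the lower tail: for `t > 0`,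
`P{∑ Xᵢ ≤ Nε} ≤ e^{tNε} ∏ E e^{-t Xᵢ}`, and the density bound gives
`E e^{-t Xᵢ} ≤ A ∫₀^∞ x^{-α} e^{-tx} dx = A Γ(1-α) t^{α-1}`.
The choice `t = (1-α)/ε` turns the product into `[C(A,α) ε]^{(1-α)N}`.
-/

open MeasureTheory ProbabilityTheory Set Real

section Density

variable {Ω : Type*} [MeasurableSpace Ω] {μ : Measure Ω} {X : Ω → ℝ} {f : ℝ → ℝ}

lemma integrableOn_Ici_of_density [NeZero μ]
    (hdens : ∀ s : Set ℝ, MeasurableSet s →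
      μ (X ⁻¹' s) = ENNReal.ofReal (∫ x in s ∩ Ici 0, f x)) :
    IntegrableOn f (Ici 0) := by
  refine Integrable.of_integral_ne_zero fun h => NeZero.ne μ ?_
  rw [← Measure.measure_univ_eq_zero, ← preimage_univ, hdens univ .univ, univ_inter, h,
    ENNReal.ofReal_zero]

lemma map_eq_withDensity_of_density (hX : Measurable X) (hf0 : ∀ x, 0 ≤ f x)
    (hf : IntegrableOn f (Ici 0))
    (hdens : ∀ s : Set ℝ, MeasurableSet s →
      μ (X ⁻¹' s) = ENNReal.ofReal (∫ x in s ∩ Ici 0, f x)) :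
    μ.map X = (volume.restrict (Ici 0)).withDensity fun x => ENNReal.ofReal (f x) := by
  ext s hs
  rw [Measure.map_apply hX hs, hdens s hs, withDensity_apply _ hs, Measure.restrict_restrict hs,
    ofReal_integral_eq_lintegral_ofReal (hf.mono_set inter_subset_right)
      (.of_forall fun x => hf0 x)]

lemma mgf_neg_le_of_density_le [NeZero μ] (hX : Measurable X) (hf0 : ∀ x, 0 ≤ f x)
    (hdens : ∀ s : Set ℝ, MeasurableSet s →
      μ (X ⁻¹' s) = ENNReal.ofReal (∫ x in s ∩ Ici 0, f x))
    {A α t : ℝ} (hA : 0 ≤ A) (hα : α < 1) (hfb : ∀ x : ℝ, 0 < x → f x ≤ A * x ^ (-α))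
    (ht : 0 < t) :
    mgf X μ (-t) ≤ A * Gamma (1 - α) * (1 / t) ^ (1 - α) := by
  have hf := integrableOn_Ici_of_density hdens
  have hgamma := integral_rpow_mul_exp_neg_mul_Ioi (sub_pos.2 hα) ht
  have hΓ := Gamma_pos_of_pos (sub_pos.2 hα)
  have hint : IntegrableOn (fun x => x ^ (1 - α - 1) * exp (-(t * x))) (Ioi 0) :=
    .of_integral_ne_zero (by rw [hgamma]; positivity)
  have hexp : Measurable fun x => exp (-t * x) := by fun_prop
  have hlint : ∫⁻ x, ENNReal.ofReal (exp (-t * x)) ∂μ.map X ≤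
      ENNReal.ofReal (A * Gamma (1 - α) * (1 / t) ^ (1 - α)) := calc
    _ = ∫⁻ x in Ioi 0, ENNReal.ofReal (f x) * ENNReal.ofReal (exp (-t * x)) := by
      rw [map_eq_withDensity_of_density hX hf0 hf hdens,
        lintegral_withDensity_eq_lintegral_mul₀ hf.aemeasurable.ennreal_ofReal
          hexp.ennreal_ofReal.aemeasurable, Measure.restrict_congr_set Ioi_ae_eq_Ici]
      rfl
    _ ≤ ∫⁻ x in Ioi 0, ENNReal.ofReal (A * (x ^ (1 - α - 1) * exp (-(t * x)))) := by
      refine setLIntegral_mono' measurableSet_Ioi fun x hx => ?_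
      rw [← ENNReal.ofReal_mul' (exp_nonneg _), sub_sub_cancel_left, neg_mul, ← mul_assoc]
      exact ENNReal.ofReal_le_ofReal (mul_le_mul_of_nonneg_right (hfb x hx) (exp_nonneg _))
    _ = _ := by
      rw [← ofReal_integral_eq_lintegral_ofReal (hint.const_mul A), integral_const_mul, hgamma,
        mul_comm (_ ^ _), mul_assoc]
      exact ae_restrict_of_forall_mem measurableSet_Ioi fun x (hx : 0 < x) => by positivity
  rw [mgf, ← integral_map hX.aemeasurable hexp.aestronglyMeasurable,
    integral_eq_lintegral_of_nonneg_ae (.of_forall fun x => (exp_pos _).le)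
      hexp.aestronglyMeasurable]
  exact ENNReal.toReal_le_of_le_ofReal (by positivity) hlint

end Density

lemma measureReal_sum_le_le_of_mgf_neg_le {Ω ι : Type*} [MeasurableSpace Ω] [Fintype ι]
    {μ : Measure Ω} [IsProbabilityMeasure μ] {X : ι → Ω → ℝ} (hX : ∀ i, Measurable (X i))
    (hXpos : ∀ i ω, 0 ≤ X i ω) (hindep : iIndepFun X μ) {t K : ℝ} (ht : 0 ≤ t)
    (hK : ∀ i, mgf (X i) μ (-t) ≤ K) (a : ℝ) :
    μ.real {ω | ∑ i, X i ω ≤ a} ≤ exp (t * a) * K ^ Fintype.card ι := by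
  have hint : Integrable (fun ω => exp (-t * (∑ i, X i) ω)) μ := by
    refine .of_bound (by fun_prop) 1 (.of_forall fun ω => ?_)
    rw [norm_of_nonneg (exp_pos _).le, exp_le_one_iff, Finset.sum_apply]
    exact mul_nonpos_of_nonpos_of_nonneg (neg_nonpos.2 ht)
      (Finset.sum_nonneg fun i _ => hXpos i ω)
  calc μ.real {ω | ∑ i, X i ω ≤ a}
      ≤ exp (t * a) * mgf (∑ i, X i) μ (-t) := by
        simpa [Finset.sum_apply] using measure_le_le_exp_mul_mgf a (neg_nonpos.2 ht) hint
    _ ≤ exp (t * a) * K ^ Fintype.card ι := by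
        rw [hindep.mgf_sum hX, ← Finset.card_univ, ← Finset.prod_const]
        gcongr with i
        exacts [fun i _ => mgf_nonneg, hK i]

lemma exp_mul_mul_pow_eq_rpow {c ε G : ℝ} (hc : 0 < c) (hε : 0 < ε) (hG : 0 ≤ G) (N : ℕ) :
    exp (c / ε * (N * ε)) * (G * (1 / (c / ε)) ^ c) ^ N
      = (exp 1 / c * G ^ (1 / c) * ε) ^ (c * N) := by
  have hbase : (exp 1 / c * G ^ (1 / c) * ε) ^ c = exp c * (G * (1 / (c / ε)) ^ c) := by
    rw [mul_rpow (by positivity) hε.le, mul_rpow (by positivity) (by positivity),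
      div_rpow (exp_pos 1).le hc.le, exp_one_rpow, ← rpow_mul hG, one_div_mul_cancel hc.ne',
      rpow_one, one_div_div, div_rpow hε.le hc.le]
    ring
  have hexponent : c / ε * (N * ε) = N * c := by field_simp
  rw [rpow_mul (by positivity), hbase, rpow_natCast, hexponent, exp_nat_mul, ← mul_pow]

theorem small_sum_probability_bound_general {Ω : Type*} [MeasureSpace Ω] (μ : Measure Ω)
    [IsProbabilityMeasure μ] (N : ℕ) (X : Fin N → Ω → ℝ)
    (hXmeas : ∀ i, Measurable (X i)) (hXpos : ∀ i ω, 0 ≤ X i ω)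
    (hindep : ProbabilityTheory.iIndepFun (m := fun _ => inferInstance) X μ)
    (A α : ℝ) (hA : 0 < A) (hα1 : α < 1) (f : Fin N → ℝ → ℝ)
    (hf0 : ∀ i x, 0 ≤ f i x) (hfbound : ∀ i, ∀ x : ℝ, 0 < x → f i x ≤ A * x ^ (-α))
    (hdens : ∀ i, ∀ s : Set ℝ, MeasurableSet s →
      μ (X i ⁻¹' s) = ENNReal.ofReal (∫ x in s ∩ Set.Ici (0 : ℝ), f i x))
    (ε : ℝ) (hε : 0 < ε) :
    μ {ω | ∑ i, X i ω ≤ N * ε} ≤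
      ENNReal.ofReal
        ((Real.exp 1 / (1 - α) * (A * Real.Gamma (1 - α)) ^ ((1 : ℝ) / (1 - α)) * ε)
          ^ ((1 - α) * N)) := by
  have hc : 0 < 1 - α := sub_pos.2 hα1
  have hG : 0 ≤ A * Gamma (1 - α) := (mul_pos hA (Gamma_pos_of_pos hc)).le
  have ht : 0 < (1 - α) / ε := div_pos hc hε
  have hchernoff := measureReal_sum_le_le_of_mgf_neg_le hXmeas hXpos hindep ht.le
    (fun i => mgf_neg_le_of_density_le (hXmeas i) (hf0 i) (hdens i) hA.le hα1 (hfbound i) ht)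
    (N * ε)
  rw [Fintype.card_fin, exp_mul_mul_pow_eq_rpow hc hε hG] at hchernoff
  exact (ENNReal.le_ofReal_iff_toReal_le (measure_ne_top _ _) (by positivity)).2 hchernoff

/-- Lemma 5: if `X₁, …, X_N` are independent nonnegative random
variables whose densities are bounded by `A x^{-α}` (`A > 0`, `0 ≤ α < 1`), then
`P{X₁ + ⋯ + X_N ≤ Nε} ≤ [C(A,α) ε]^{(1-α)N}` with
`C(A,α) = (e/(1-α)) [A Γ(1-α)]^{1/(1-α)}`. -/
theorem small_sum_probability_bound {Ω : Type*} [MeasureSpace Ω] (μ : Measure Ω)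
    [IsProbabilityMeasure μ] (N : ℕ) (hN : 1 ≤ N) (X : Fin N → Ω → ℝ)
    (hXmeas : ∀ i, Measurable (X i)) (hXpos : ∀ i ω, 0 ≤ X i ω)
    (hindep : ProbabilityTheory.iIndepFun (m := fun _ => inferInstance) X μ)
    (A α : ℝ) (hA : 0 < A) (hα0 : 0 ≤ α) (hα1 : α < 1) (f : Fin N → ℝ → ℝ)
    (hf0 : ∀ i x, 0 ≤ f i x) (hfbound : ∀ i, ∀ x : ℝ, 0 < x → f i x ≤ A * x ^ (-α))
    (hdens : ∀ i, ∀ s : Set ℝ, MeasurableSet s →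
      μ (X i ⁻¹' s) = ENNReal.ofReal (∫ x in s ∩ Set.Ici (0 : ℝ), f i x))
    (ε : ℝ) (hε : 0 < ε) :
    μ {ω | ∑ i, X i ω ≤ N * ε} ≤
      ENNReal.ofReal
        ((Real.exp 1 / (1 - α) * (A * Real.Gamma (1 - α)) ^ ((1 : ℝ) / (1 - α)) * ε)
          ^ ((1 - α) * N)) :=
  small_sum_probability_bound_general μ N X hXmeas hXpos hindep A α hA hα1 f hf0 hfbound hdens ε hε
end

section
/- Let $\mu$ be a probability measure on $\mathbb{R}^n$, let $b > 0$, and suppose that the functional inequality holds: for every locally Lipschitz $\phi: \operatorname{supp}\mu \to [0,1]$ with $\mu\{\phi = 0\} \ge 1/2$ and $\mu\{\phi = 1\} \ge a$, one has $\int \|\nabla\phi\|_2\, d\mu \ge b$. Then for every measurable set $A$ with $a \le \mu(A) < 1/2$, the lower Minkowski content satisfies $\mu^+(A) \ge b$. -/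
open MeasureTheory

/-- Lower Minkowski content of `A` with respect to `μ` (Euclidean distance). -/
noncomputable def minkContent {E : Type*} [MeasurableSpace E] [PseudoMetricSpace E]
    (μ : Measure E) (A : Set E) : ENNReal :=
  Filter.liminf
    (fun ε : ℝ => (μ {x | Metric.infDist x A ≤ ε} - μ A) / ENNReal.ofReal ε)
    (nhdsWithin 0 (Set.Ioi 0))

/-- (3) ⟹ (1) of Proposition A: if every locally Lipschitz
`φ : ℝⁿ → [0,1]` with `μ{φ = 0} ≥ 1/2` and `μ{φ = 1} ≥ a` satisfies
`∫‖∇φ‖₂ dμ ≥ b`, then every measurable `A` with `a ≤ μ(A) < 1/2` has lower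
Minkowski content `μ⁺(A) ≥ b`. -/
theorem functional_implies_isoperimetric (n : ℕ)
    (μ : Measure (EuclideanSpace ℝ (Fin n))) [IsProbabilityMeasure μ]
    (a b : ℝ) (ha0 : 0 < a) (ha1 : a < 1 / 2) (hb : 0 < b)
    (hfun : ∀ φ : EuclideanSpace ℝ (Fin n) → ℝ, LocallyLipschitz φ →
      (∀ x, φ x ∈ Set.Icc (0 : ℝ) 1) →
      μ {x | φ x = 0} ≥ 1 / 2 → μ {x | φ x = 1} ≥ ENNReal.ofReal a →
      ∫⁻ x, ENNReal.ofReal ‖fderiv ℝ φ x‖ ∂μ ≥ ENNReal.ofReal b) :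
    ∀ A : Set (EuclideanSpace ℝ (Fin n)), MeasurableSet A →
      ENNReal.ofReal a ≤ μ A → μ A < 1 / 2 → minkContent μ A ≥ ENNReal.ofReal b := by
  intro A hAmeas haA hAhalf
  -- the deficit δ = 1/2 - μ A is positive and finite
  set δ : ENNReal := 1 / 2 - μ A with hδdef
  have hδpos : 0 < δ := tsub_pos_of_lt hAhalf
  have hδne : δ ≠ ⊤ := by
    apply ne_of_lt
    calc δ ≤ 1 / 2 := tsub_le_self
    _ < ⊤ := by norm_num
  set d : ℝ := δ.toReal with hddef
  have hdpos : 0 < d := ENNReal.toReal_pos hδpos.ne' hδne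
  have hε₀pos : 0 < d / b := div_pos hdpos hb
  have key : ∀ᶠ ε in nhdsWithin 0 (Set.Ioi 0),
      ENNReal.ofReal b ≤ (μ {x | Metric.infDist x A ≤ ε} - μ A) / ENNReal.ofReal ε := by
    filter_upwards [Ioc_mem_nhdsGT hε₀pos] with ε hε
    obtain ⟨hε0, hεle⟩ := hε
    have hεne : ENNReal.ofReal ε ≠ 0 := by
      simp [ENNReal.ofReal_eq_zero, not_le, hε0]
    have hAsub : A ⊆ {x | Metric.infDist x A ≤ ε} := by
      intro x hx
      simp only [Set.mem_setOf_eq, Metric.infDist_zero_of_mem hx]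
      exact hε0.le
    by_cases hcase : 1 / 2 ≤ μ {x | Metric.infDist x A < ε}
    · -- the ε-neighborhood already has measure ≥ 1/2: quotient blows up
      have h1 : δ ≤ μ {x | Metric.infDist x A ≤ ε} - μ A := by
        have hsub2 : {x : EuclideanSpace ℝ (Fin n) | Metric.infDist x A < ε} ⊆
            {x | Metric.infDist x A ≤ ε} := fun x hx => le_of_lt (Set.mem_setOf_eq ▸ hx)
        exact tsub_le_tsub_right (le_trans hcase (measure_mono hsub2)) (μ A)
      refine le_trans ?_ (ENNReal.div_le_div_right h1 _)
      rw [ENNReal.le_div_iff_mul_le (Or.inl hεne)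
        (Or.inl ENNReal.ofReal_ne_top)]
      calc ENNReal.ofReal b * ENNReal.ofReal ε = ENNReal.ofReal (b * ε) :=
            (ENNReal.ofReal_mul hb.le).symm
        _ ≤ ENNReal.ofReal (b * (d / b)) := by
            apply ENNReal.ofReal_le_ofReal
            exact mul_le_mul_of_nonneg_left hεle hb.le
        _ = ENNReal.ofReal d := by rw [mul_div_cancel₀ _ hb.ne']
        _ = δ := ENNReal.ofReal_toReal hδne
    · -- apply the functional inequality to φ x = max 0 (1 - infDist x A / ε)
      push_neg at hcase
      set φ : EuclideanSpace ℝ (Fin n) → ℝ := fun x => max 0 (1 - Metric.infDist x A / ε) with hφdef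
      have hlip : LipschitzWith (Real.toNNReal ε⁻¹) φ := by
        apply LipschitzWith.of_dist_le_mul
        intro x y
        have h1 := (Metric.lipschitz_infDist_pt A).dist_le_mul x y
        simp only [Real.dist_eq, NNReal.coe_one, one_mul] at h1 ⊢
        calc |φ x - φ y| ≤ |(1 - Metric.infDist x A / ε) - (1 - Metric.infDist y A / ε)| := by
              simpa [max_comm] using
                abs_max_sub_max_le_abs (1 - Metric.infDist x A / ε)
                  (1 - Metric.infDist y A / ε) 0
          _ = |Metric.infDist x A - Metric.infDist y A| / ε := by
              rw [show (1 - Metric.infDist x A / ε) - (1 - Metric.infDist y A / ε) =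
                (Metric.infDist y A - Metric.infDist x A) / ε by ring, abs_div,
                abs_of_pos hε0, abs_sub_comm]
          _ ≤ dist x y / ε := by
              gcongr
          _ = (Real.toNNReal ε⁻¹ : ℝ) * dist x y := by
              rw [Real.coe_toNNReal _ (inv_nonneg.2 hε0.le)]
              rw [div_eq_inv_mul]
      have hrange : ∀ x, φ x ∈ Set.Icc (0 : ℝ) 1 := by
        intro x
        constructor
        · exact le_max_left _ _
        · apply max_le zero_le_one
          have : 0 ≤ Metric.infDist x A / ε := div_nonneg Metric.infDist_nonneg hε0.le
          linarith
      have hφ1 : ∀ x, x ∈ A → φ x = 1 := by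
        intro x hx
        simp [hφdef, Metric.infDist_zero_of_mem hx]
      have hφ0 : ∀ x, ε ≤ Metric.infDist x A → φ x = 0 := by
        intro x hx
        have : 1 ≤ Metric.infDist x A / ε := (one_le_div hε0).2 hx
        simp only [hφdef, max_eq_left_iff]
        linarith
      have hmeas_lt : MeasurableSet {x : EuclideanSpace ℝ (Fin n) | Metric.infDist x A < ε} :=
        measurableSet_lt (Metric.continuous_infDist_pt A).measurable measurable_const
      have hμ0 : μ {x | φ x = 0} ≥ 1 / 2 := by
        have hsub : {x : EuclideanSpace ℝ (Fin n) | Metric.infDist x A < ε}ᶜ ⊆ {x | φ x = 0} := by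
          intro x hx
          simp only [Set.mem_compl_iff, Set.mem_setOf_eq, not_lt] at hx
          exact hφ0 x hx
        calc (1 : ENNReal) / 2 = 1 - 1 / 2 := by
              rw [ENNReal.sub_half ENNReal.one_ne_top]
          _ ≤ 1 - μ {x : EuclideanSpace ℝ (Fin n) | Metric.infDist x A < ε} :=
              tsub_le_tsub_left hcase.le 1
          _ = μ {x : EuclideanSpace ℝ (Fin n) | Metric.infDist x A < ε}ᶜ :=
              (prob_compl_eq_one_sub hmeas_lt).symm
          _ ≤ μ {x | φ x = 0} := measure_mono hsub
      have hμ1 : μ {x | φ x = 1} ≥ ENNReal.ofReal a := by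
        refine le_trans haA (measure_mono ?_)
        intro x hx; exact hφ1 x hx
      have hint := hfun φ hlip.locallyLipschitz hrange hμ0 hμ1
      -- bound the integral by (μ Aε - μ A)/ε
      set T : Set (EuclideanSpace ℝ (Fin n)) := {x | 0 < Metric.infDist x A ∧ Metric.infDist x A < ε} with hTdef
      have hTmeas : MeasurableSet T :=
        (measurableSet_lt measurable_const (Metric.continuous_infDist_pt A).measurable).inter
          hmeas_lt
      have hptwise : ∀ x, ENNReal.ofReal ‖fderiv ℝ φ x‖ ≤
          T.indicator (fun _ => ENNReal.ofReal ε⁻¹) x := by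
        intro x
        by_cases hxT : x ∈ T
        · rw [Set.indicator_of_mem hxT]
          apply ENNReal.ofReal_le_ofReal
          have := norm_fderiv_le_of_lipschitz ℝ hlip (x₀ := x)
          rwa [Real.coe_toNNReal _ (inv_nonneg.2 hε0.le)] at this
        · rw [Set.indicator_of_notMem hxT]
          have hzero : fderiv ℝ φ x = 0 := by
            simp only [hTdef, Set.mem_setOf_eq, not_and_or, not_lt] at hxT
            rcases hxT with h | h
            · -- infDist x A = 0 : global max
              have hd0 : Metric.infDist x A = 0 :=
                le_antisymm h Metric.infDist_nonneg
              have hmax : IsLocalMax φ x := by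
                apply Filter.Eventually.of_forall
                intro y
                have : φ x = 1 := by simp [hφdef, hd0]
                rw [this]
                exact (hrange y).2
              exact hmax.fderiv_eq_zero
            · -- infDist x A ≥ ε : global min
              have hmin : IsLocalMin φ x := by
                apply Filter.Eventually.of_forall
                intro y
                rw [hφ0 x h]
                exact (hrange y).1
              exact hmin.fderiv_eq_zero
          simp [hzero]
      have hTsub : T ⊆ {x | Metric.infDist x A ≤ ε} \ A := by
        intro x hx
        obtain ⟨hx1, hx2⟩ := hx
        refine ⟨hx2.le, fun hxA => ?_⟩
        rw [Metric.infDist_zero_of_mem hxA] at hx1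
        exact lt_irrefl _ hx1
      have hbound : ∫⁻ x, ENNReal.ofReal ‖fderiv ℝ φ x‖ ∂μ ≤
          ENNReal.ofReal ε⁻¹ * (μ {x | Metric.infDist x A ≤ ε} - μ A) := by
        calc ∫⁻ x, ENNReal.ofReal ‖fderiv ℝ φ x‖ ∂μ
            ≤ ∫⁻ x, T.indicator (fun _ => ENNReal.ofReal ε⁻¹) x ∂μ :=
              lintegral_mono hptwise
          _ = ENNReal.ofReal ε⁻¹ * μ T := lintegral_indicator_const hTmeas _
          _ ≤ ENNReal.ofReal ε⁻¹ * μ ({x | Metric.infDist x A ≤ ε} \ A) := by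
              exact mul_le_mul_right (measure_mono hTsub) _
          _ = ENNReal.ofReal ε⁻¹ * (μ {x | Metric.infDist x A ≤ ε} - μ A) := by
              rw [measure_diff hAsub hAmeas.nullMeasurableSet (measure_ne_top μ A)]
      calc ENNReal.ofReal b ≤ ENNReal.ofReal ε⁻¹ * (μ {x | Metric.infDist x A ≤ ε} - μ A) :=
            le_trans hint hbound
        _ = (μ {x | Metric.infDist x A ≤ ε} - μ A) / ENNReal.ofReal ε := by
            rw [ENNReal.ofReal_inv_of_pos hε0, mul_comm, ENNReal.div_eq_inv_mul, mul_comm]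
  exact Filter.le_liminf_of_le (by isBoundedDefault) key
end

section
/- Let $\mu$ be a probability measure on a metric space, $F$ a 1-Lipschitz real function with median $M$, and suppose that for all measurable $A$ the surface measure satisfies $\mu^+(A) \ge c n^{1/p} \tilde a \log^{1-1/p}(1/\tilde a)$ where $\tilde a = \min(\mu(A), 1 - \mu(A))$, for constants $c > 0$, $n \ge 1$, $1 \le p \le 2$. Then for all $t > 0$, $\mu\{F > M + t\} \le \frac{1}{2}\exp(-c_1 n t^p)$ with $c_1 = c^p/p^p$. -/
open MeasureTheory

/-!
Put `G s = μ {F ≤ M + s}` and `I(a) = c n^{1/p} a log^{1-1/p}(1/a)`. As `F` is 1-Lipschitz, the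
`ε`-neighbourhood of `{F ≤ M + s}` lies inside `{F ≤ M + s + ε}`, so the isoperimetric inequality
bounds the lower right Dini derivative of `G` below by `I(1 - G s)` for `s ≥ 0`, where `G ≥ 1/2`.
For `c' < c` the function `B s = 1 - ½ exp(-k s^p)`, `k = (c'/p)^p n`, is a strict subsolution:
`B 0 = 1/2 ≤ G 0`, and since `log (1/(1 - B s)) ≥ k s^p` one gets `B' < I(1 - B)` (for `c' = c` and
`p = 1` this is an equality, hence the detour through `c' < c`). A first-contact
argument gives `B ≤ G` on `[0, t]`, which is the tail bound with `c'`; let `c' → c`.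
-/

open Filter Set Topology Real

theorem eventually_le_of_hasDerivAt_lt_slope {G B : ℝ → ℝ} {m D K : ℝ} (hB : HasDerivAt B D m)
    (hDK : D < K) (hm : B m = G m) (hslope : ∀ᶠ ε in 𝓝[>] 0, K * ε ≤ G (m + ε) - G m) :
    ∀ᶠ ε in 𝓝[>] 0, B (m + ε) ≤ G (m + ε) := by
  have hderiv : Tendsto (fun ε => ε⁻¹ • (B (m + ε) - B m)) (𝓝[>] 0) (𝓝 D) :=
    (hasDerivAt_iff_tendsto_slope_zero.mp hB).mono_left
      (nhdsWithin_mono _ fun ε hε => ne_of_gt hε)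
  filter_upwards [hderiv.eventually_lt_const hDK, hslope, self_mem_nhdsWithin]
    with ε hB' hG' hε
  rw [smul_eq_mul, inv_mul_lt_iff₀ hε] at hB'
  linarith

theorem le_of_monotone_of_contact_slope {G B B' : ℝ → ℝ} {a b : ℝ} (hG : Monotone G)
    (hB : ∀ x, HasDerivAt B (B' x) x) (ha : B a ≤ G a)
    (contact : ∀ m ∈ Ico a b, B m = G m →
      ∃ K, B' m < K ∧ ∀ᶠ ε in 𝓝[>] 0, K * ε ≤ G (m + ε) - G m) :
    ∀ s ∈ Icc a b, B s ≤ G s := by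
  have hBc : Continuous B := continuous_iff_continuousAt.2 fun x => (hB x).continuousAt
  have step : ∀ m ∈ Ico a b, B m ≤ G m → ∀ᶠ ε in 𝓝[>] 0, B (m + ε) ≤ G (m + ε) := by
    intro m hm hle
    rcases hle.lt_or_eq with hlt | heq
    · have hcont : Tendsto (fun ε => B (m + ε)) (𝓝 0) (𝓝 (B m)) :=
        (hBc.comp (continuous_const_add m)).tendsto' 0 (B m) (by simp)
      filter_upwards [(hcont.mono_left nhdsWithin_le_nhds).eventually_lt_const hlt,
        self_mem_nhdsWithin] with ε hε hε0
      exact hε.le.trans (hG (le_add_of_nonneg_right (le_of_lt hε0)))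
    · obtain ⟨K, hK, hslope⟩ := contact m hm heq
      exact eventually_le_of_hasDerivAt_lt_slope (hB m) hK heq hslope
  by_contra! hbad
  obtain ⟨s₀, hs₀, hlt₀⟩ := hbad
  set S := {s ∈ Icc a b | G s < B s}
  have hne : S.Nonempty := ⟨s₀, hs₀, hlt₀⟩
  have hbdd : BddBelow S := ⟨a, fun s hs => hs.1.1⟩
  set m := sInf S
  have ham : a ≤ m := le_csInf hne fun s hs => hs.1.1
  have hms₀ : m ≤ s₀ := csInf_le hbdd ⟨hs₀, hlt₀⟩
  have below : ∀ u ∈ Ico a m, B u ≤ G u := fun u hu =>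
    not_lt.1 fun h => hu.2.not_ge (csInf_le hbdd ⟨⟨hu.1, hu.2.le.trans (hms₀.trans hs₀.2)⟩, h⟩)
  have hm : B m ≤ G m := by
    rcases ham.eq_or_lt with ham | ham
    · exact ham ▸ ha
    · refine le_of_tendsto ((hBc.tendsto m).mono_left nhdsWithin_le_nhds :
        Tendsto B (𝓝[<] m) _) ?_
      filter_upwards [Ioo_mem_nhdsLT ham] with u hu
      exact (below u ⟨hu.1.le, hu.2⟩).trans (hG hu.2.le)
  have hmS : m ∉ S := fun h => h.2.not_ge hm
  have hmb : m < b := by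
    refine lt_of_le_of_ne (hms₀.trans hs₀.2) fun hmb => hmS ?_
    rw [le_antisymm hms₀ (hmb ▸ hs₀.2)]
    exact ⟨hs₀, hlt₀⟩
  obtain ⟨u, hu, hgood⟩ := mem_nhdsGT_iff_exists_Ioo_subset.mp (step m ⟨ham, hmb⟩ hm)
  obtain ⟨s, hsS, hsu⟩ := exists_lt_of_csInf_lt hne (lt_add_of_pos_right m hu)
  have hms : m < s := (csInf_le hbdd hsS).lt_of_ne (by rintro rfl; exact hmS hsS)
  have hsgood : B (m + (s - m)) ≤ G (m + (s - m)) := hgood ⟨sub_pos.2 hms, by linarith⟩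
  rw [add_sub_cancel] at hsgood
  exact hsS.2.not_ge hsgood

section Sublevel

variable {X : Type*} [PseudoMetricSpace X]

theorem LipschitzWith.setOf_infDist_sublevel_le_subset {F : X → ℝ} (hF : LipschitzWith 1 F)
    {r : ℝ} (hne : {x | F x ≤ r}.Nonempty) (ε : ℝ) :
    {x | Metric.infDist x {x | F x ≤ r} ≤ ε} ⊆ {x | F x ≤ r + ε} := by
  intro x hx
  have hdist : F x - r ≤ Metric.infDist x {x | F x ≤ r} := by
    refine (Metric.le_infDist hne).2 fun y (hy : F y ≤ r) => ?_
    have := hF.dist_le_mul x y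
    rw [NNReal.coe_one, one_mul, Real.dist_eq] at this
    linarith [le_abs_self (F x - F y)]
  exact show F x ≤ r + ε by linarith [hx.out]

variable [MeasurableSpace X]

theorem eventually_mul_le_of_lt_minkContent {μ : Measure X} {A : Set X} {K : ENNReal}
    (hK : K < minkContent μ A) :
    ∀ᶠ ε in 𝓝[>] 0, K * ENNReal.ofReal ε ≤ μ {x | Metric.infDist x A ≤ ε} - μ A := by
  filter_upwards [eventually_lt_of_lt_liminf hK, self_mem_nhdsWithin] with ε hε hε0
  exact (ENNReal.le_div_iff_mul_le (.inl (ENNReal.ofReal_pos.2 hε0).ne')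
    (.inl ENNReal.ofReal_ne_top)).1 hε.le

theorem LipschitzWith.eventually_mul_le_measureReal_sublevel_sub {μ : Measure X}
    [IsFiniteMeasure μ] {F : X → ℝ} (hF : LipschitzWith 1 F) {r K : ℝ} (hK₀ : 0 ≤ K)
    (hne : {x | F x ≤ r}.Nonempty) (hK : ENNReal.ofReal K < minkContent μ {x | F x ≤ r}) :
    ∀ᶠ ε in 𝓝[>] 0, K * ε ≤ μ.real {x | F x ≤ r + ε} - μ.real {x | F x ≤ r} := by
  filter_upwards [eventually_mul_le_of_lt_minkContent hK, self_mem_nhdsWithin] with ε hε hε0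
  have hmono : μ {x | F x ≤ r} ≤ μ {x | F x ≤ r + ε} :=
    measure_mono fun x (hx : F x ≤ r) => show F x ≤ r + ε by linarith [hε0.out]
  have := (ENNReal.ofReal_le_iff_le_toReal (by finiteness)).1 <|
    (ENNReal.ofReal_mul hK₀ ▸ hε).trans
      (tsub_le_tsub_right (measure_mono (hF.setOf_infDist_sublevel_le_subset hne ε)) _)
  rwa [ENNReal.toReal_sub_of_le hmono (measure_ne_top μ _)] at this

noncomputable def isoProfile (c n p a : ℝ) : ℝ :=
  c * n ^ (1 / p) * a * log (1 / a) ^ (1 - 1 / p)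

theorem LipschitzWith.eventually_mul_le_measureReal_sublevel_sub_of_lt_isoProfile
    {μ : Measure X} [IsFiniteMeasure μ] [OpensMeasurableSpace X] {c n p : ℝ}
    (hiso : ∀ A : Set X, MeasurableSet A →
      ENNReal.ofReal (isoProfile c n p (min (μ.real A) (1 - μ.real A))) ≤ minkContent μ A)
    {F : X → ℝ} (hF : LipschitzWith 1 F) {r K : ℝ} (hr : 1 / 2 ≤ μ.real {x | F x ≤ r})
    (hK₀ : 0 ≤ K) (hK : K < isoProfile c n p (1 - μ.real {x | F x ≤ r})) :
    ∀ᶠ ε in 𝓝[>] 0, K * ε ≤ μ.real {x | F x ≤ r + ε} - μ.real {x | F x ≤ r} := by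
  have hne : {x | F x ≤ r}.Nonempty :=
    nonempty_of_measure_ne_zero (μ := μ) fun h => by norm_num [measureReal_def, h] at hr
  refine hF.eventually_mul_le_measureReal_sublevel_sub hK₀ hne <| lt_of_lt_of_le ?_
    (hiso _ (measurableSet_le hF.continuous.measurable measurable_const))
  rwa [ENNReal.ofReal_lt_ofReal_iff_of_nonneg hK₀, min_eq_right (by linarith)]

end Sublevel

noncomputable def tailBound (k p s : ℝ) : ℝ := 1 / 2 * exp (-(k * s ^ p))

theorem hasDerivAt_tailBound {k p : ℝ} (hp : 1 ≤ p) (s : ℝ) :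
    HasDerivAt (tailBound k p) (-(tailBound k p s * (k * (p * s ^ (p - 1))))) s :=
  (((hasDerivAt_rpow_const (Or.inr hp)).const_mul k).neg.exp.const_mul (1 / 2)).congr_deriv
    (by simp only [tailBound, Pi.neg_apply]; ring)

theorem log_one_div_tailBound (k p s : ℝ) : log (1 / tailBound k p s) = log 2 + k * s ^ p := by
  rw [tailBound, one_div, mul_inv, exp_neg, inv_inv, log_mul (by norm_num) (exp_pos _).ne',
    log_exp, one_div, inv_inv]

theorem rpow_profile_identity {c n p m : ℝ} (hc : 0 < c) (hn : 0 < n) (hp : 1 ≤ p) (hm : 0 ≤ m) :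
    c * n ^ (1 / p) * (c ^ p / p ^ p * n * m ^ p) ^ (1 - 1 / p) =
      c ^ p / p ^ p * n * (p * m ^ (p - 1)) := by
  have hp₀ : 0 < p := by linarith
  have hpow : ∀ x : ℝ, 0 ≤ x → (x ^ p) ^ (1 - 1 / p) = x ^ (p - 1) := fun x hx => by
    rw [← rpow_mul hx, mul_sub, mul_one, mul_one_div_cancel hp₀.ne']
  have hn' : n ^ (1 / p) * n ^ (1 - 1 / p) = n := by
    rw [← rpow_add hn, add_sub_cancel, rpow_one]
  rw [mul_rpow (by positivity) (by positivity), mul_rpow (by positivity) hn.le,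
    div_rpow (by positivity) (by positivity), hpow c hc.le, hpow p hp₀.le, hpow m hm,
    rpow_sub_one hc.ne', rpow_sub_one hp₀.ne']
  calc _ = c ^ p / p ^ p * (n ^ (1 / p) * n ^ (1 - 1 / p)) * (p * m ^ (p - 1)) := by
        field_simp
    _ = _ := by rw [hn']

theorem tailBound_mul_lt_isoProfile {c c' n p k m : ℝ} (hc' : 0 < c') (hc'c : c' < c)
    (hn : 0 < n) (hp : 1 ≤ p) (hk : k = c' ^ p / p ^ p * n) (hm : 0 ≤ m) :
    tailBound k p m * (k * (p * m ^ (p - 1))) < isoProfile c n p (tailBound k p m) := by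
  have hk₀ : 0 < k := hk ▸ by positivity
  have hL : 0 < (log 2 + k * m ^ p) ^ (1 - 1 / p) := rpow_pos_of_pos (by positivity) _
  have key : k * (p * m ^ (p - 1)) < c * n ^ (1 / p) * (log 2 + k * m ^ p) ^ (1 - 1 / p) :=
    calc k * (p * m ^ (p - 1)) = c' * n ^ (1 / p) * (k * m ^ p) ^ (1 - 1 / p) := by
          rw [hk, rpow_profile_identity hc' hn hp hm]
      _ ≤ c' * n ^ (1 / p) * (log 2 + k * m ^ p) ^ (1 - 1 / p) := by
          gcongr
          · exact sub_nonneg.2 (div_le_one_of_le₀ hp (by linarith))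
          · linarith [log_pos one_lt_two]
      _ < c * n ^ (1 / p) * (log 2 + k * m ^ p) ^ (1 - 1 / p) := by gcongr
  have hR : 0 < tailBound k p m := by unfold tailBound; positivity
  rw [isoProfile, log_one_div_tailBound]
  nlinarith

theorem LipschitzWith.measureReal_tail_le_of_lt {X : Type*} [PseudoMetricSpace X]
    [MeasurableSpace X] [OpensMeasurableSpace X] {μ : Measure X} [IsProbabilityMeasure μ]
    {c c' n p : ℝ} (hc' : 0 < c') (hc'c : c' < c) (hn : 0 < n) (hp : 1 ≤ p)
    (hiso : ∀ A : Set X, MeasurableSet A →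
      ENNReal.ofReal (isoProfile c n p (min (μ.real A) (1 - μ.real A))) ≤ minkContent μ A)
    {F : X → ℝ} (hF : LipschitzWith 1 F) {M : ℝ} (hM : 1 / 2 ≤ μ {x | F x ≤ M})
    {t : ℝ} (ht : 0 ≤ t) :
    μ.real {x | M + t < F x} ≤ 1 / 2 * exp (-(c' ^ p / p ^ p) * n * t ^ p) := by
  set k := c' ^ p / p ^ p * n with hk
  set G : ℝ → ℝ := fun s => μ.real {x | F x ≤ M + s}
  have hsub : ∀ {a b : ℝ}, a ≤ b → {x | F x ≤ M + a} ⊆ {x | F x ≤ M + b} :=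
    fun hab x (hx : F x ≤ _) => show F x ≤ _ by linarith
  have hGhalf : ∀ s, 0 ≤ s → 1 / 2 ≤ G s := fun s hs => by
    have hsub₀ : {x | F x ≤ M} ⊆ {x | F x ≤ M + s} :=
      fun x (hx : F x ≤ M) => show F x ≤ M + s by linarith
    simpa [G, measureReal_def] using
      ENNReal.toReal_mono (measure_ne_top _ _) (hM.trans (measure_mono hsub₀))
  have hBG : ∀ s ∈ Icc 0 t, 1 - tailBound k p s ≤ G s := by
    refine le_of_monotone_of_contact_slope (fun a b hab => measureReal_mono (hsub hab))
      (fun s => ((hasDerivAt_tailBound hp s).const_sub 1).congr_deriv (neg_neg _)) ?_ ?_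
    · have h0 : tailBound k p 0 = 1 / 2 := by
        simp [tailBound, zero_rpow (by linarith : p ≠ 0)]
      linarith [h0, hGhalf 0 le_rfl]
    · intro m hm hcontact
      obtain ⟨K, hBK, hK⟩ := exists_between (tailBound_mul_lt_isoProfile hc' hc'c hn hp hk hm.1)
      have hK₀ : 0 ≤ K := hBK.le.trans' <| by
        have := rpow_nonneg hm.1 (p - 1)
        unfold tailBound
        positivity
      rw [show tailBound k p m = 1 - G m by linarith] at hK
      refine ⟨K, hBK, ?_⟩
      simpa only [G, add_assoc] using
        hF.eventually_mul_le_measureReal_sublevel_sub_of_lt_isoProfile hiso (hGhalf m hm.1) hK₀ hK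
  calc μ.real {x | M + t < F x} = 1 - G t := by
        rw [← probReal_compl_eq_one_sub
          (measurableSet_le hF.continuous.measurable measurable_const)]
        simp only [compl_ofPred, not_le]
    _ ≤ tailBound k p t := by linarith [hBG t ⟨ht, le_rfl⟩]
    _ = 1 / 2 * exp (-(c' ^ p / p ^ p) * n * t ^ p) := by rw [tailBound, hk]; ring_nf

theorem concentration_from_isoperimetry_general {X : Type*} [MetricSpace X]
    [MeasurableSpace X] [BorelSpace X] (μ : Measure X) [IsProbabilityMeasure μ]
    (c : ℝ) (hc : 0 < c) (n : ℕ) (hn : 1 ≤ n) (p : ℝ) (hp1 : 1 ≤ p)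
    (hiso : ∀ A : Set X, MeasurableSet A →
      minkContent μ A ≥
        ENNReal.ofReal (c * (n : ℝ) ^ ((1 : ℝ) / p) *
          min (μ A).toReal (1 - (μ A).toReal) *
          (Real.log (1 / min (μ A).toReal (1 - (μ A).toReal))) ^ (1 - 1 / p)))
    (F : X → ℝ) (hF : LipschitzWith 1 F) (M : ℝ)
    (hM₂ : μ {x | F x ≤ M} ≥ 1 / 2) :
    ∀ t : ℝ, 0 < t →
      μ {x | M + t < F x} ≤
        ENNReal.ofReal ((1 / 2) * Real.exp (-(c ^ p / p ^ p) * n * t ^ p)) := by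
  intro t ht
  set bound : ℝ → ℝ := fun c' => 1 / 2 * exp (-(c' ^ p / p ^ p) * n * t ^ p)
  have hbound : ∀ c' ∈ Ioo 0 c, μ.real {x | M + t < F x} ≤ bound c' := fun c' hc' =>
    hF.measureReal_tail_le_of_lt hc'.1 hc'.2 (by exact_mod_cast hn) hp1 hiso hM₂ ht.le
  have hcont : ContinuousAt bound c := by
    have := continuousAt_id.rpow_const (p := p) (Or.inl hc.ne')
    fun_prop
  rw [ENNReal.le_ofReal_iff_toReal_le (measure_ne_top _ _) (by positivity)]
  exact ge_of_tendsto (hcont.tendsto.mono_left nhdsWithin_le_nhds)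
    (eventually_of_mem (Ioo_mem_nhdsLT hc) hbound)

/-- if `μ` satisfies the isoperimetric inequality
`μ⁺(A) ≥ c n^{1/p} ã log^{1-1/p}(1/ã)` (with `ã = min(μA, 1-μA)`) and `F` is
1-Lipschitz with median `M`, then `μ{F > M + t} ≤ (1/2) exp(-c₁ n t^p)` with
`c₁ = c^p/p^p`. -/
theorem concentration_from_isoperimetry {X : Type*} [MetricSpace X]
    [MeasurableSpace X] [BorelSpace X] (μ : Measure X) [IsProbabilityMeasure μ]
    (c : ℝ) (hc : 0 < c) (n : ℕ) (hn : 1 ≤ n) (p : ℝ) (hp1 : 1 ≤ p) (hp2 : p ≤ 2)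
    (hiso : ∀ A : Set X, MeasurableSet A →
      minkContent μ A ≥
        ENNReal.ofReal (c * (n : ℝ) ^ ((1 : ℝ) / p) *
          min (μ A).toReal (1 - (μ A).toReal) *
          (Real.log (1 / min (μ A).toReal (1 - (μ A).toReal))) ^ (1 - 1 / p)))
    (F : X → ℝ) (hF : LipschitzWith 1 F) (M : ℝ)
    (hM₁ : μ {x | M ≤ F x} ≥ 1 / 2) (hM₂ : μ {x | F x ≤ M} ≥ 1 / 2) :
    ∀ t : ℝ, 0 < t →
      μ {x | M + t < F x} ≤
        ENNReal.ofReal ((1 / 2) * Real.exp (-(c ^ p / p ^ p) * n * t ^ p)) :=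
  concentration_from_isoperimetry_general μ c hc n hn p hp1 hiso F hF M hM₂
end

section
/- Define $\phi(h) = \mu\{F > M + h\}$ for $h \ge 0$, where $\phi$ is nonincreasing with $\phi(0) \le 1/2$, and suppose the left upper derivative satisfies $\phi'(h) \le -c n^{1/p}\phi(h)\log^{1-1/p}(1/\phi(h))$ whenever $\phi(h) > 0$. Then $\phi(h) \le \frac{1}{2}\exp(-(c/p)^p n h^p)$ for all $h \ge 0$. -/
/-!
Put `ψ = (log (1 / φ)) ^ (1 / p)`. The differential inequality says that `ψ` grows at
rate at least `(c / p) n ^ (1 / p)`, and `ψ 0 ≥ (log 2) ^ (1 / p)`, so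
`log (1 / φ h) ≥ ((log 2) ^ (1 / p) + (c / p) n ^ (1 / p) h) ^ p ≥ log 2 + (c / p) ^ p n h ^ p`
by superadditivity of `t ↦ t ^ p` for `p ≥ 1`. To avoid differentiating `ψ`, `φ` is instead
compared with the barriers `exp (-(θ (v + k x)) ^ p)`, `θ < 1`: they start strictly above `φ` and
satisfy the differential inequality strictly, so `φ` can never touch them; then `θ → 1`.
-/

open MeasureTheory Set Filter Topology

theorem lt_of_limsup_slope_left_lt_deriv_boundary {f f' B B' : ℝ → ℝ} {a b : ℝ}
    (hf : ContinuousOn f (Icc a b)) (hB : ContinuousOn B (Icc a b))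
    (hB' : ∀ x ∈ Ioc a b, HasDerivWithinAt B (B' x) (Iic x) x)
    (hf' : ∀ x ∈ Ioc a b, ∀ r, f' x < r → ∀ᶠ z in 𝓝[<] x, slope f x z < r)
    (ha : f a < B a) (bound : ∀ x ∈ Ioc a b, f x = B x → f' x < B' x) :
    ∀ ⦃x⦄, x ∈ Icc a b → f x < B x := by
  -- `x₀` is the first point where `f` reaches `B`; the bound on the left slope of `f` there
  -- forces `f > B` just before `x₀`.
  by_contra! hS
  set S := Icc a b ∩ (fun x => f x - B x) ⁻¹' Ici 0
  have hSne : S.Nonempty := by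
    obtain ⟨x, hx, hBf⟩ := hS
    exact ⟨x, hx, sub_nonneg.2 hBf⟩
  have hSbdd : BddBelow S := ⟨a, fun x hx => hx.1.1⟩
  have hSclosed : IsClosed S := (hf.sub hB).preimage_isClosed_of_isClosed isClosed_Icc isClosed_Ici
  set x₀ := sInf S
  have hx₀ : x₀ ∈ S := hSclosed.csInf_mem hSne hSbdd
  have hBf₀ : B x₀ ≤ f x₀ := sub_nonneg.1 hx₀.2
  have hax₀ : a < x₀ := hx₀.1.1.lt_of_ne fun h => (h ▸ ha).not_ge hBf₀
  have below : ∀ x ∈ Ico a x₀, f x < B x := fun x hx => by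
    by_contra! h
    exact (csInf_le hSbdd ⟨⟨hx.1, hx.2.le.trans hx₀.1.2⟩, sub_nonneg.2 h⟩).not_gt hx.2
  have hsub : Ico a x₀ ⊆ Icc a b := fun x hx => ⟨hx.1, hx.2.le.trans hx₀.1.2⟩
  have touch : f x₀ = B x₀ := by
    refine le_antisymm (ContinuousWithinAt.closure_le ?_ ?_ ?_ fun x hx => (below x hx).le) hBf₀
    · rw [closure_Ico hax₀.ne]; exact right_mem_Icc.2 hax₀.le
    · exact (hf x₀ hx₀.1).mono hsub
    · exact (hB x₀ hx₀.1).mono hsub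
  obtain ⟨r, hfr, hrB⟩ := exists_between (bound x₀ ⟨hax₀, hx₀.1.2⟩ touch)
  have hBslope : ∀ᶠ z in 𝓝[<] x₀, r < slope B x₀ z := by
    have := hasDerivWithinAt_iff_tendsto_slope.1 (hB' x₀ ⟨hax₀, hx₀.1.2⟩)
    rw [Iic_sdiff_right] at this
    exact this.eventually_const_lt hrB
  obtain ⟨z, hfz, hBz, hz⟩ :=
    ((hf' x₀ ⟨hax₀, hx₀.1.2⟩ r hfr).and (hBslope.and (Ioo_mem_nhdsLT hax₀))).exists
  have hslope : slope f x₀ z < slope B x₀ z := hfz.trans hBz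
  rw [slope_def_field, slope_def_field, div_lt_div_right_of_neg (sub_neg.2 hz.2), touch] at hslope
  exact (below z ⟨hz.1.le, hz.2⟩).not_gt (by linarith)

theorem continuousOn_of_sub_eq_integral {φ g : ℝ → ℝ} {a b : ℝ}
    (hg : IntervalIntegrable g volume a b) (hφ : ∀ t ∈ Icc a b, φ t - φ a = ∫ u in a..t, g u) :
    ContinuousOn φ (Icc a b) := by
  have hprim := (intervalIntegral.continuousOn_primitive_interval' hg left_mem_uIcc).mono
    Icc_subset_uIcc
  refine ((continuousOn_const (c := φ a)).add hprim).congr fun t ht => ?_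
  rw [Pi.add_apply, ← hφ t ht, add_sub_cancel]

theorem AntitoneOn.eventually_slope_lt_of_limsup_lt {f : ℝ → ℝ} {a x r : ℝ}
    (hf : AntitoneOn f (Ici a)) (hx : a < x)
    (hr : limsup (fun z => (f x - f z) / (x - z)) (𝓝[<] x) < r) :
    ∀ᶠ z in 𝓝[<] x, slope f x z < r := by
  have hbdd : IsBoundedUnder (· ≤ ·) (𝓝[<] x) fun z => (f x - f z) / (x - z) := by
    refine isBoundedUnder_of_eventually_le (a := 0) ?_
    filter_upwards [Ioo_mem_nhdsLT hx] with z hz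
    exact div_nonpos_of_nonpos_of_nonneg
      (sub_nonpos.2 (hf hz.1.le (le_of_lt hx) hz.2.le)) (sub_pos.2 hz.2).le
  filter_upwards [eventually_lt_of_limsup_lt hr hbdd] with z hz
  rwa [slope_def_field, ← neg_div_neg_eq, neg_sub, neg_sub]

theorem hasDerivAt_exp_neg_rpow {p v k x : ℝ} (hx : 0 < v + k * x) :
    HasDerivAt (fun x => Real.exp (-(v + k * x) ^ p))
      (-(k * p * (v + k * x) ^ (p - 1) * Real.exp (-(v + k * x) ^ p))) x := by
  have hlin : HasDerivAt (fun x => v + k * x) k x := by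
    simpa using ((hasDerivAt_id x).const_mul k).const_add v
  exact (hlin.rpow_const (p := p) (Or.inl hx.ne')).neg.exp.congr_deriv (by simp only [Pi.neg_apply]; ring)

theorem exp_neg_rpow_add_le {a b p : ℝ} (ha : 0 ≤ a) (hb : 0 ≤ b) (hp : 1 ≤ p) :
    Real.exp (-(a + b) ^ p) ≤ Real.exp (-a ^ p) * Real.exp (-b ^ p) := by
  rw [← Real.exp_add, Real.exp_le_exp, ← neg_add]
  exact neg_le_neg (Real.add_rpow_le_rpow_add ha hb hp)

theorem le_exp_neg_rpow_of_forall_lt_one {y z p : ℝ} (hp : 0 ≤ p)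
    (h : ∀ θ ∈ Ioo (0 : ℝ) 1, y < Real.exp (-(θ * z) ^ p)) :
    y ≤ Real.exp (-z ^ p) := by
  have hcont : ContinuousAt (fun θ : ℝ => Real.exp (-(θ * z) ^ p)) 1 :=
    ((continuousAt_id.mul continuousAt_const).rpow_const (Or.inr hp)).neg.rexp
  refine ge_of_tendsto (by simpa using hcont.tendsto.mono_left nhdsWithin_le_nhds :
    Tendsto _ (𝓝[<] (1 : ℝ)) _) ?_
  filter_upwards [Ioo_mem_nhdsLT one_pos] with θ hθ using (h θ hθ).le

theorem lt_exp_neg_rpow_of_limsup_slope_le {φ : ℝ → ℝ} {A p v k b : ℝ} (hp : 0 < p) (hv : 0 < v)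
    (hk : 0 ≤ k) (hkA : p * k < A) (hmono : AntitoneOn φ (Ici 0))
    (hcont : ContinuousOn φ (Icc 0 b)) (hφ0 : φ 0 < Real.exp (-v ^ p))
    (hderiv : ∀ x, 0 < x → 0 < φ x →
      limsup (fun s => (φ x - φ s) / (x - s)) (𝓝[<] x) ≤
        -(A * φ x * Real.log (1 / φ x) ^ (1 - 1 / p))) :
    ∀ x ∈ Icc 0 b, φ x < Real.exp (-(v + k * x) ^ p) := by
  have hpos : ∀ x, 0 ≤ x → 0 < v + k * x := fun x hx => by positivity
  refine lt_of_limsup_slope_left_lt_deriv_boundary hcont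
    (fun x hx => (hasDerivAt_exp_neg_rpow (hpos x hx.1)).continuousAt.continuousWithinAt)
    (fun x hx => (hasDerivAt_exp_neg_rpow (hpos x hx.1.le)).hasDerivWithinAt)
    (fun x hx r hr => hmono.eventually_slope_lt_of_limsup_lt hx.1 hr) (by simpa using hφ0) ?_
  intro x hx htouch
  set w := v + k * x
  have hw : 0 < w := hpos x hx.1.le
  have hlog : Real.log (1 / φ x) ^ (1 - 1 / p) = w ^ (p - 1) := by
    rw [htouch, one_div, ← Real.exp_neg, neg_neg, Real.log_exp, ← Real.rpow_mul hw.le]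
    congr 1
    field_simp
  have hpos' : 0 < w ^ (p - 1) * Real.exp (-w ^ p) := by positivity
  calc limsup (fun s => (φ x - φ s) / (x - s)) (𝓝[<] x)
      ≤ -(A * φ x * Real.log (1 / φ x) ^ (1 - 1 / p)) :=
        hderiv x hx.1 (htouch ▸ Real.exp_pos _)
    _ = -(A * (w ^ (p - 1) * Real.exp (-w ^ p))) := by rw [hlog, htouch]; ring
    _ < -(k * p * w ^ (p - 1) * Real.exp (-w ^ p)) := by nlinarith

theorem le_exp_neg_rpow_of_limsup_slope_le {φ : ℝ → ℝ} {A p v k b : ℝ} (hp : 0 < p) (hv : 0 < v)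
    (hk : 0 < k) (hkA : p * k ≤ A) (hmono : AntitoneOn φ (Ici 0))
    (hcont : ContinuousOn φ (Icc 0 b)) (hφ0 : φ 0 ≤ Real.exp (-v ^ p))
    (hderiv : ∀ x, 0 < x → 0 < φ x →
      limsup (fun s => (φ x - φ s) / (x - s)) (𝓝[<] x) ≤
        -(A * φ x * Real.log (1 / φ x) ^ (1 - 1 / p))) :
    ∀ x ∈ Icc 0 b, φ x ≤ Real.exp (-(v + k * x) ^ p) := by
  intro x hx
  refine le_exp_neg_rpow_of_forall_lt_one hp.le fun θ ⟨hθ0, hθ1⟩ => ?_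
  have hθv : θ * v < v := mul_lt_of_lt_one_left hv hθ1
  have hφ0' : φ 0 < Real.exp (-(θ * v) ^ p) :=
    hφ0.trans_lt (Real.exp_lt_exp.2 (neg_lt_neg (Real.rpow_lt_rpow (by positivity) hθv hp)))
  have hkA' : p * (θ * k) < A := calc
    p * (θ * k) = θ * (p * k) := by ring
    _ < p * k := mul_lt_of_lt_one_left (by positivity) hθ1
    _ ≤ A := hkA
  have := lt_exp_neg_rpow_of_limsup_slope_le hp (by positivity) (by positivity) hkA' hmono hcont
    hφ0' hderiv x hx
  rwa [mul_assoc, ← mul_add] at this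

theorem gaussian_type_decay_from_differential_inequality_general
    (c : ℝ) (hc : 0 < c) (n : ℕ) (hn : 1 ≤ n) (p : ℝ) (hp1 : 1 ≤ p)
    (φ : ℝ → ℝ) (hmono : AntitoneOn φ (Set.Ici 0))
    (hrange : ∀ h : ℝ, 0 ≤ h → φ h ∈ Set.Icc (0 : ℝ) (1 / 2))
    -- absolute continuity: `φ` is an integral of some locally integrable `g`
    (hAC : ∃ g : ℝ → ℝ, (∀ s t : ℝ, 0 ≤ s → s ≤ t → IntervalIntegrable g volume s t) ∧
      ∀ s t : ℝ, 0 ≤ s → s ≤ t → φ t - φ s = ∫ u in s..t, g u)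
    -- the left upper derivative bound
    (hderiv : ∀ h : ℝ, 0 < h → 0 < φ h →
      Filter.limsup (fun s => (φ h - φ s) / (h - s)) (nhdsWithin h (Set.Iio h)) ≤
        -(c * (n : ℝ) ^ ((1 : ℝ) / p) * φ h * (Real.log (1 / φ h)) ^ (1 - 1 / p))) :
    ∀ h : ℝ, 0 ≤ h → φ h ≤ (1 / 2) * Real.exp (-((c / p) ^ p * n * h ^ p)) := by
  intro h hh
  obtain ⟨g, hg, hφg⟩ := hAC
  have hp : 0 < p := by linarith
  have hlog2 : 0 < Real.log 2 := Real.log_pos one_lt_two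
  have hN : 0 < (n : ℝ) ^ (1 / p) := Real.rpow_pos_of_pos (by exact_mod_cast hn) _
  set v := Real.log 2 ^ (1 / p) with hv_def
  set k := c / p * (n : ℝ) ^ (1 / p) with hk_def
  have hv : 0 < v := Real.rpow_pos_of_pos hlog2 _
  have hk : 0 < k := by positivity
  have hvp : v ^ p = Real.log 2 := by rw [hv_def, one_div, Real.rpow_inv_rpow hlog2.le hp.ne']
  have hkp : (k * h) ^ p = (c / p) ^ p * n * h ^ p := by
    rw [Real.mul_rpow (by positivity) hh, Real.mul_rpow (by positivity) hN.le, one_div,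
      Real.rpow_inv_rpow (Nat.cast_nonneg n) hp.ne']
  have hφ0 : φ 0 ≤ Real.exp (-v ^ p) := by
    rw [hvp, Real.exp_neg, Real.exp_log two_pos]
    simpa using (hrange 0 le_rfl).2
  have hcont : ContinuousOn φ (Icc 0 h) :=
    continuousOn_of_sub_eq_integral (hg 0 h le_rfl hh) fun t ht => hφg 0 t le_rfl ht.1
  calc φ h ≤ Real.exp (-(v + k * h) ^ p) :=
        le_exp_neg_rpow_of_limsup_slope_le hp hv hk
          (by rw [hk_def]; field_simp; rfl) hmono hcont hφ0 hderiv h ⟨hh, le_rfl⟩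
    _ ≤ Real.exp (-v ^ p) * Real.exp (-(k * h) ^ p) :=
        exp_neg_rpow_add_le hv.le (mul_nonneg hk.le hh) hp1
    _ = (1 / 2) * Real.exp (-((c / p) ^ p * n * h ^ p)) := by
        rw [hvp, hkp, Real.exp_neg (Real.log 2), Real.exp_log two_pos, one_div]

/-- if `φ : [0,∞) → [0,1/2]` is nonincreasing, absolutely continuous,
and its left upper derivative satisfies
`φ'(h) ≤ -c n^{1/p} φ(h) log^{1-1/p}(1/φ(h))` whenever `φ(h) > 0`, then
`φ(h) ≤ (1/2) exp(-(c/p)^p n h^p)` for all `h ≥ 0`. -/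
theorem gaussian_type_decay_from_differential_inequality
    (c : ℝ) (hc : 0 < c) (n : ℕ) (hn : 1 ≤ n) (p : ℝ) (hp1 : 1 ≤ p) (hp2 : p ≤ 2)
    (φ : ℝ → ℝ) (hmono : AntitoneOn φ (Set.Ici 0))
    (hrange : ∀ h : ℝ, 0 ≤ h → φ h ∈ Set.Icc (0 : ℝ) (1 / 2))
    -- absolute continuity: `φ` is an integral of some locally integrable `g`
    (hAC : ∃ g : ℝ → ℝ, (∀ s t : ℝ, 0 ≤ s → s ≤ t → IntervalIntegrable g volume s t) ∧
      ∀ s t : ℝ, 0 ≤ s → s ≤ t → φ t - φ s = ∫ u in s..t, g u)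
    -- the left upper derivative bound
    (hderiv : ∀ h : ℝ, 0 < h → 0 < φ h →
      Filter.limsup (fun s => (φ h - φ s) / (h - s)) (nhdsWithin h (Set.Iio h)) ≤
        -(c * (n : ℝ) ^ ((1 : ℝ) / p) * φ h * (Real.log (1 / φ h)) ^ (1 - 1 / p))) :
    ∀ h : ℝ, 0 ≤ h → φ h ≤ (1 / 2) * Real.exp (-((c / p) ^ p * n * h ^ p)) :=
  gaussian_type_decay_from_differential_inequality_general c hc n hn p hp1 φ hmono hrange hAC hderiv
end

section
/- Let $\mu$ be a probability measure on $\mathbb{R}^n$ and $c, b > 0$. Suppose that for every locally Lipschitz $\phi: \mathbb{R}^n \to [0,1]$ with $\mu\{\phi = 0\} \ge 1/2$ and $\mu\{\phi = 1\} \ge a$ one has $\int \|\nabla\phi\|_2\, d\mu \ge c\, n^{1/p} a \log^{1-1/p}(1/a)$ for all $0 < a < 1/2$. Then there is a constant $c_1 > 0$ depending only on $c$ such that for every locally Lipschitz $\phi: \mathbb{R}^n \to [0,1]$ with $\mu\{\phi = 0\} \ge 1/2$ and $\mu\{\phi = 1\} \ge a$, $\int \|\nabla\phi\|_2^2\, d\mu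 \ge c_1 n^{2/p} a \log^{2-2/p}(1/a)$. -/
/-!
Write `G a = c n^{1/p} log^{1-1/p}(1/a)`, so that the hypothesis reads `∫ ‖∇φ‖ ≥ a G(a)`, and
prove `∫ ‖∇φ‖² ≥ a G(a)² / 256` by descending induction on the level `a`. For `a ≥ 1/256` this is
Cauchy–Schwarz on the whole space. Otherwise, either the upper half `{φ ≥ 1/2}` has measure at
most `16 a`, and Cauchy–Schwarz on it, applied to the upper truncation `(2φ - 1)⁺` (a test function
at level `a` with gradient `2∇φ` on `{1/2 < φ < 1}` and `0` elsewhere), gives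
`∫ ‖∇φ‖² ≥ a G(a)² / 64`; or the lower truncation `min (2φ) 1` is a test function at level `16 a`
with at most four times the energy of `φ`, and the induction hypothesis applies to it because
`G(a) ≤ 2 G(16 a)` for small `a`.
-/

open MeasureTheory Set Topology

open scoped ENNReal

section Gradient

variable {E : Type*} [NormedAddCommGroup E] [NormedSpace ℝ E]

theorem fderiv_eq_zero_of_notMem_Ioo {f : E → ℝ} {a b : ℝ} (hf : ∀ y, f y ∈ Icc a b) {x : E}
    (hx : f x ∉ Ioo a b) : fderiv ℝ f x = 0 := by
  by_cases ha : a < f x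
  · have hb : f x = b := le_antisymm (hf x).2 (not_lt.1 fun h => hx ⟨ha, h⟩)
    exact IsLocalMax.fderiv_eq_zero (.of_forall fun y => hb ▸ (hf y).2)
  · have ha : f x = a := le_antisymm (not_lt.1 ha) (hf x).1
    exact IsLocalMin.fderiv_eq_zero (.of_forall fun y => ha ▸ (hf y).1)

theorem fderiv_fun_const_mul_field (c : ℝ) (f : E → ℝ) :
    fderiv ℝ (fun y => c * f y) = c • fderiv ℝ f :=
  fderiv_const_smul_field c

theorem max_two_mul_sub_one_mem_Icc {t : ℝ} (ht : t ∈ Icc (0 : ℝ) 1) :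
    max (2 * t - 1) 0 ∈ Icc (0 : ℝ) 1 :=
  ⟨le_max_right _ _, max_le (by linarith [ht.2]) zero_le_one⟩

theorem min_two_mul_mem_Icc {t : ℝ} (ht : t ∈ Icc (0 : ℝ) 1) :
    min (2 * t) 1 ∈ Icc (0 : ℝ) 1 :=
  ⟨le_min (by linarith [ht.1]) zero_le_one, min_le_right _ _⟩

variable {φ : E → ℝ}

theorem norm_fderiv_max_two_mul_sub_one_le (hφ : Continuous φ) (h01 : ∀ y, φ y ∈ Icc (0 : ℝ) 1)
    (x : E) :
    ‖fderiv ℝ (fun y => max (2 * φ y - 1) 0) x‖ ≤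
      (φ ⁻¹' Ioo (1 / 2) 1).indicator (fun y => 2 * ‖fderiv ℝ φ y‖) x := by
  by_cases hx : x ∈ φ ⁻¹' Ioo (1 / 2) 1
  · have hloc : (fun y => max (2 * φ y - 1) 0) =ᶠ[𝓝 x] fun y => 2 * φ y - 1 :=
      (hφ.continuousAt.eventually (Ioi_mem_nhds hx.1)).mono fun y hy =>
        max_eq_left (by linarith [show 1 / 2 < φ y from hy])
    rw [indicator_of_mem hx, hloc.fderiv_eq, fderiv_sub_const, fderiv_fun_const_mul_field,
      Pi.smul_apply, norm_smul, Real.norm_two]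
  · rw [indicator_of_notMem hx, fderiv_eq_zero_of_notMem_Ioo
      (fun y => max_two_mul_sub_one_mem_Icc (h01 y)), norm_zero]
    rintro ⟨h0, h1⟩
    exact hx ⟨by linarith [(lt_max_iff.1 h0).resolve_right (lt_irrefl 0)],
      by linarith [(max_lt_iff.1 h1).1]⟩

theorem norm_fderiv_min_two_mul_le (hφ : Continuous φ) (h01 : ∀ y, φ y ∈ Icc (0 : ℝ) 1) (x : E) :
    ‖fderiv ℝ (fun y => min (2 * φ y) 1) x‖ ≤ 2 * ‖fderiv ℝ φ x‖ := by
  by_cases hx : φ x < 1 / 2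
  · have hloc : (fun y => min (2 * φ y) 1) =ᶠ[𝓝 x] fun y => 2 * φ y :=
      (hφ.continuousAt.eventually (Iio_mem_nhds hx)).mono fun y hy =>
        min_eq_left (by linarith [show φ y < 1 / 2 from hy])
    rw [hloc.fderiv_eq, fderiv_fun_const_mul_field, Pi.smul_apply, norm_smul, Real.norm_two]
  · rw [fderiv_eq_zero_of_notMem_Ioo (fun y => min_two_mul_mem_Icc (h01 y)), norm_zero]
    · positivity
    · rintro ⟨-, h1⟩
      exact hx (by linarith [(min_lt_iff.1 h1).resolve_right (lt_irrefl 1)])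

end Gradient

section CauchySchwarz

variable {α : Type*} [MeasurableSpace α] {μ : Measure α}

theorem sq_lintegral_le_measure_univ_mul {g : α → ℝ≥0∞} (hg : AEMeasurable g μ) :
    (∫⁻ x, g x ∂μ) ^ 2 ≤ μ univ * ∫⁻ x, g x ^ 2 ∂μ := by
  have h := ENNReal.lintegral_mul_norm_pow_le (hg.pow_const 2) aemeasurable_const
    (by norm_num : (0 : ℝ) ≤ 1 / 2) (by norm_num : (0 : ℝ) ≤ 1 / 2) (by norm_num)
    (g := fun _ => (1 : ℝ≥0∞))
  have hsq : ∀ x, (g x ^ 2) ^ (1 / 2 : ℝ) = g x := fun x => by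
    rw [← ENNReal.rpow_natCast, ← ENNReal.rpow_mul]; norm_num
  simp only [hsq, ENNReal.one_rpow, mul_one, lintegral_const, one_mul] at h
  calc (∫⁻ x, g x ∂μ) ^ 2
      ≤ ((∫⁻ x, g x ^ 2 ∂μ) ^ (1 / 2 : ℝ) * μ univ ^ (1 / 2 : ℝ)) ^ 2 := by gcongr
    _ = μ univ * ∫⁻ x, g x ^ 2 ∂μ := by
      rw [← ENNReal.mul_rpow_of_nonneg _ _ (by norm_num), ← ENNReal.rpow_natCast,
        ← ENNReal.rpow_mul, mul_comm]
      norm_num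

theorem ofReal_sq_div_le_lintegral_norm_sq {F : Type*} [NormedAddCommGroup F] [MeasurableSpace F]
    [OpensMeasurableSpace F] {u : α → F} {v : α → ℝ} (hu : Measurable u) {T : Set α}
    (hT : MeasurableSet T) {K r t : ℝ} (hK : 0 < K) (hr : 0 ≤ r) (ht : 0 < t)
    (hμT : μ T ≤ ENNReal.ofReal t)
    (hrv : ENNReal.ofReal r ≤ ∫⁻ x, ENNReal.ofReal (v x) ∂μ)
    (hvu : ∀ x, v x ≤ T.indicator (fun y => K * ‖u y‖) x) :
    ENNReal.ofReal (r ^ 2 / (K ^ 2 * t)) ≤ ∫⁻ x, ENNReal.ofReal (‖u x‖ ^ 2) ∂μ := by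
  have hv : ∫⁻ x, ENNReal.ofReal (v x) ∂μ ≤ ENNReal.ofReal K * ∫⁻ x in T, ‖u x‖ₑ ∂μ := by
    rw [← lintegral_const_mul' _ _ ENNReal.ofReal_ne_top, ← lintegral_indicator hT]
    refine lintegral_mono fun x => (ENNReal.ofReal_le_ofReal (hvu x)).trans_eq ?_
    by_cases hx : x ∈ T
    · simp [hx, ENNReal.ofReal_mul hK.le]
    · simp [hx]
  have hT2 : (∫⁻ x in T, ‖u x‖ₑ ∂μ) ^ 2 ≤ μ T * ∫⁻ x, ‖u x‖ₑ ^ 2 ∂μ := by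
    refine (sq_lintegral_le_measure_univ_mul hu.enorm.aemeasurable).trans ?_
    rw [Measure.restrict_apply_univ]
    gcongr
    exact Measure.restrict_le_self
  have hI : ∫⁻ x, ENNReal.ofReal (‖u x‖ ^ 2) ∂μ = ∫⁻ x, ‖u x‖ₑ ^ 2 ∂μ := by
    simp_rw [← ofReal_norm, ENNReal.ofReal_pow (norm_nonneg _)]
  rw [hI, ENNReal.ofReal_div_of_pos (by positivity), ENNReal.ofReal_pow hr]
  refine ENNReal.div_le_of_le_mul' ?_
  calc ENNReal.ofReal r ^ 2 ≤ (ENNReal.ofReal K * ∫⁻ x in T, ‖u x‖ₑ ∂μ) ^ 2 := by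
        gcongr; exact hrv.trans hv
    _ ≤ ENNReal.ofReal K ^ 2 * (μ T * ∫⁻ x, ‖u x‖ₑ ^ 2 ∂μ) := by
        rw [mul_pow]; gcongr
    _ ≤ ENNReal.ofReal (K ^ 2 * t) * ∫⁻ x, ‖u x‖ₑ ^ 2 ∂μ := by
        rw [ENNReal.ofReal_mul (by positivity), ENNReal.ofReal_pow hK.le, mul_assoc]
        gcongr

end CauchySchwarz

theorem log_one_div_rpow_le_two_mul {q a : ℝ} (hq0 : 0 ≤ q) (hq1 : q ≤ 1) (ha : 0 < a)
    (ha' : a ≤ 1 / 256) : Real.log (1 / a) ^ q ≤ 2 * Real.log (1 / (16 * a)) ^ q := by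
  have hl : Real.log 16 ≤ Real.log (1 / (16 * a)) :=
    Real.log_le_log (by norm_num) (by rw [le_div_iff₀ (by positivity)]; nlinarith)
  have h16 : 0 ≤ Real.log 16 := Real.log_nonneg (by norm_num)
  have hL : Real.log (1 / a) = Real.log 16 + Real.log (1 / (16 * a)) := by
    rw [← Real.log_mul (by norm_num) (by positivity)]
    field_simp
  calc Real.log (1 / a) ^ q ≤ (2 * Real.log (1 / (16 * a))) ^ q :=
        Real.rpow_le_rpow (by linarith) (by linarith) hq0
    _ = 2 ^ q * Real.log (1 / (16 * a)) ^ q := Real.mul_rpow zero_le_two (h16.trans hl)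
    _ ≤ 2 * Real.log (1 / (16 * a)) ^ q := mul_le_mul_of_nonneg_right
        (Real.rpow_le_self_of_one_le one_le_two hq1) (Real.rpow_nonneg (h16.trans hl) q)

structure IsCapacityTest {E : Type*} [PseudoEMetricSpace E] [MeasurableSpace E] (μ : Measure E)
    (a : ℝ) (φ : E → ℝ) : Prop where
  locallyLipschitz : LocallyLipschitz φ
  mem_Icc : ∀ x, φ x ∈ Icc (0 : ℝ) 1
  half_le_measure_zero : 1 / 2 ≤ μ {x | φ x = 0}
  ofReal_le_measure_one : ENNReal.ofReal a ≤ μ {x | φ x = 1}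

namespace IsCapacityTest

variable {E : Type*} [PseudoEMetricSpace E] [MeasurableSpace E] {μ : Measure E} {a : ℝ}
  {φ : E → ℝ}

theorem max_two_mul_sub_one (hφ : IsCapacityTest μ a φ) :
    IsCapacityTest μ a (fun x => max (2 * φ x - 1) 0) where
  locallyLipschitz := by
    simpa only [two_mul] using
      ((hφ.locallyLipschitz.add hφ.locallyLipschitz).sub (.const 1)).max_const 0
  mem_Icc x := max_two_mul_sub_one_mem_Icc (hφ.mem_Icc x)
  half_le_measure_zero :=
    hφ.half_le_measure_zero.trans (measure_mono fun x (hx : φ x = 0) => by simp [hx])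
  ofReal_le_measure_one :=
    hφ.ofReal_le_measure_one.trans (measure_mono fun x (hx : φ x = 1) => by norm_num [hx])

theorem min_two_mul (hφ : IsCapacityTest μ a φ) {b : ℝ}
    (hb : ENNReal.ofReal b ≤ μ {x | 1 / 2 ≤ φ x}) :
    IsCapacityTest μ b (fun x => min (2 * φ x) 1) where
  locallyLipschitz := by
    simpa only [two_mul] using (hφ.locallyLipschitz.add hφ.locallyLipschitz).min_const 1
  mem_Icc x := min_two_mul_mem_Icc (hφ.mem_Icc x)
  half_le_measure_zero :=
    hφ.half_le_measure_zero.trans (measure_mono fun x (hx : φ x = 0) => by simp [hx])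
  ofReal_le_measure_one :=
    hb.trans (measure_mono fun x (hx : 1 / 2 ≤ φ x) =>
      show min (2 * φ x) 1 = 1 from min_eq_right (by linarith))

end IsCapacityTest

section CapacityInequality

variable {E : Type*} [NormedAddCommGroup E] [NormedSpace ℝ E] [MeasurableSpace E]

theorem lintegral_sq_fderiv_min_two_mul_le {μ : Measure E} {φ : E → ℝ} (hφ : Continuous φ)
    (h01 : ∀ y, φ y ∈ Icc (0 : ℝ) 1) :
    ∫⁻ x, ENNReal.ofReal (‖fderiv ℝ (fun y => min (2 * φ y) 1) x‖ ^ 2) ∂μ ≤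
      4 * ∫⁻ x, ENNReal.ofReal (‖fderiv ℝ φ x‖ ^ 2) ∂μ := by
  rw [← lintegral_const_mul' _ _ (by norm_num)]
  refine lintegral_mono fun x => ?_
  rw [← ENNReal.ofReal_ofNat 4, ← ENNReal.ofReal_mul (by norm_num)]
  have := norm_fderiv_min_two_mul_le hφ h01 x
  gcongr
  nlinarith [norm_nonneg (fderiv ℝ (fun y => min (2 * φ y) 1) x)]

def L1CapacityInequality (μ : Measure E) (G : ℝ → ℝ) : Prop :=
  ∀ a ∈ Ioo (0 : ℝ) (1 / 2), ∀ φ, IsCapacityTest μ a φ →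
    ENNReal.ofReal (a * G a) ≤ ∫⁻ x, ENNReal.ofReal ‖fderiv ℝ φ x‖ ∂μ

variable [OpensMeasurableSpace E] {μ : Measure E} {G : ℝ → ℝ} {a : ℝ} {φ : E → ℝ}

namespace L1CapacityInequality

theorem ofReal_le_lintegral_of_large_level [IsProbabilityMeasure μ]
    (hL1 : L1CapacityInequality μ G) (hG : 0 ≤ G a) (ha : a ∈ Ico (1 / 256) (1 / 2))
    (hφ : IsCapacityTest μ a φ) :
    ENNReal.ofReal (1 / 256 * a * G a ^ 2) ≤ ∫⁻ x, ENNReal.ofReal (‖fderiv ℝ φ x‖ ^ 2) ∂μ := by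
  have ha0 : 0 < a := lt_of_lt_of_le (by norm_num) ha.1
  have h := ofReal_sq_div_le_lintegral_norm_sq (measurable_fderiv ℝ φ) MeasurableSet.univ
    one_pos (by positivity) one_pos (by simp) (hL1 a ⟨ha0, ha.2⟩ φ hφ) (by simp)
  refine le_trans (ENNReal.ofReal_le_ofReal ?_) h
  have : 0 ≤ a * G a ^ 2 := by positivity
  nlinarith [ha.1]

theorem ofReal_le_lintegral_of_thin_upper_half (hL1 : L1CapacityInequality μ G) (hG : 0 ≤ G a)
    (ha : a ∈ Ioo (0 : ℝ) (1 / 2)) (hφ : IsCapacityTest μ a φ)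
    (hthin : μ {x | 1 / 2 ≤ φ x} ≤ ENNReal.ofReal (16 * a)) :
    ENNReal.ofReal (a * G a ^ 2 / 64) ≤ ∫⁻ x, ENNReal.ofReal (‖fderiv ℝ φ x‖ ^ 2) ∂μ := by
  have hcont := hφ.locallyLipschitz.continuous
  have hT : MeasurableSet (φ ⁻¹' Ioo (1 / 2) 1) := (isOpen_Ioo.preimage hcont).measurableSet
  have hμT : μ (φ ⁻¹' Ioo (1 / 2) 1) ≤ ENNReal.ofReal (16 * a) :=
    (measure_mono fun x hx => le_of_lt hx.1).trans hthin
  have h := ofReal_sq_div_le_lintegral_norm_sq (measurable_fderiv ℝ φ) hT two_pos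
    (mul_nonneg ha.1.le hG) (by linarith [ha.1]) hμT (hL1 a ha _ hφ.max_two_mul_sub_one)
    (norm_fderiv_max_two_mul_sub_one_le hcont hφ.mem_Icc)
  convert h using 2
  field_simp
  ring

theorem ofReal_le_lintegral_of_small_level (hL1 : L1CapacityInequality μ G) (hG0 : 0 ≤ G a)
    (hG : G a ≤ 2 * G (16 * a)) (ha : a ∈ Ioo 0 (1 / 256)) (hφ : IsCapacityTest μ a φ)
    (ih : ∀ ψ, IsCapacityTest μ (16 * a) ψ →
      ENNReal.ofReal (1 / 256 * (16 * a) * G (16 * a) ^ 2) ≤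
        ∫⁻ x, ENNReal.ofReal (‖fderiv ℝ ψ x‖ ^ 2) ∂μ) :
    ENNReal.ofReal (1 / 256 * a * G a ^ 2) ≤ ∫⁻ x, ENNReal.ofReal (‖fderiv ℝ φ x‖ ^ 2) ∂μ := by
  by_cases hthin : μ {x | 1 / 2 ≤ φ x} ≤ ENNReal.ofReal (16 * a)
  · refine le_trans (ENNReal.ofReal_le_ofReal ?_) (hL1.ofReal_le_lintegral_of_thin_upper_half
      hG0 ⟨ha.1, by linarith [ha.2]⟩ hφ hthin)
    have : 0 ≤ a * G a ^ 2 := mul_nonneg ha.1.le (sq_nonneg _)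
    nlinarith
  have key : ENNReal.ofReal (4 * (1 / 256 * a * G a ^ 2)) ≤
      4 * ∫⁻ x, ENNReal.ofReal (‖fderiv ℝ φ x‖ ^ 2) ∂μ := by
    refine le_trans (ENNReal.ofReal_le_ofReal ?_) ((ih _ (hφ.min_two_mul (not_le.1 hthin).le)).trans
      (lintegral_sq_fderiv_min_two_mul_le hφ.locallyLipschitz.continuous hφ.mem_Icc))
    have : G a ^ 2 ≤ (2 * G (16 * a)) ^ 2 := pow_le_pow_left₀ hG0 hG 2
    nlinarith [ha.1]
  rwa [ENNReal.ofReal_mul zero_le_four, ENNReal.ofReal_ofNat,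
    ENNReal.mul_le_mul_iff_right four_ne_zero (by norm_num)] at key

theorem ofReal_le_lintegral_sq_fderiv [IsProbabilityMeasure μ] (hL1 : L1CapacityInequality μ G)
    (hG0 : ∀ a ∈ Ioo (0 : ℝ) (1 / 2), 0 ≤ G a)
    (hG : ∀ a ∈ Ioo (0 : ℝ) (1 / 256), G a ≤ 2 * G (16 * a))
    (ha : a ∈ Ioo (0 : ℝ) (1 / 2)) (hφ : IsCapacityTest μ a φ) :
    ENNReal.ofReal (1 / 256 * a * G a ^ 2) ≤ ∫⁻ x, ENNReal.ofReal (‖fderiv ℝ φ x‖ ^ 2) ∂μ := by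
  obtain ⟨N, hN⟩ := exists_pow_lt_of_lt_one ha.1 (by norm_num : (1 / 16 : ℝ) < 1)
  induction N generalizing a φ with
  | zero => linarith [ha.2, pow_zero (1 / 16 : ℝ)]
  | succ N ih =>
    by_cases hlarge : 1 / 256 ≤ a
    · exact hL1.ofReal_le_lintegral_of_large_level (hG0 a ha) ⟨hlarge, ha.2⟩ hφ
    have ha' : a ∈ Ioo 0 (1 / 256) := ⟨ha.1, not_le.1 hlarge⟩
    refine hL1.ofReal_le_lintegral_of_small_level (hG0 a ha) (hG a ha') ha' hφ fun ψ hψ => ?_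
    refine ih ⟨by linarith [ha.1], by linarith [ha'.2]⟩ hψ ?_
    rw [pow_succ] at hN
    linarith

end L1CapacityInequality

end CapacityInequality

/-- Proposition B: an `L¹` capacity inequality
`∫‖∇φ‖₂ dμ ≥ c n^{1/p} a log^{1-1/p}(1/a)` for all admissible `φ` implies the `L²`
capacity inequality `∫‖∇φ‖₂² dμ ≥ c₁ n^{2/p} a log^{2-2/p}(1/a)`, with `c₁`
depending only on `c`. -/
theorem L1_capacity_implies_L2_capacity (c : ℝ) (hc : 0 < c) :
    ∃ c₁ : ℝ, 0 < c₁ ∧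
      ∀ (n : ℕ), 1 ≤ n → ∀ (p : ℝ), 1 ≤ p → p ≤ 2 →
      ∀ (μ : Measure (EuclideanSpace ℝ (Fin n))), IsProbabilityMeasure μ →
      (∀ a : ℝ, 0 < a → a < 1 / 2 →
        ∀ φ : EuclideanSpace ℝ (Fin n) → ℝ, LocallyLipschitz φ →
          (∀ x, φ x ∈ Set.Icc (0 : ℝ) 1) →
          μ {x | φ x = 0} ≥ 1 / 2 → μ {x | φ x = 1} ≥ ENNReal.ofReal a →
          ∫⁻ x, ENNReal.ofReal ‖fderiv ℝ φ x‖ ∂μ ≥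
            ENNReal.ofReal (c * (n : ℝ) ^ ((1 : ℝ) / p) * a *
              (Real.log (1 / a)) ^ (1 - 1 / p))) →
      ∀ a : ℝ, 0 < a → a < 1 / 2 →
        ∀ φ : EuclideanSpace ℝ (Fin n) → ℝ, LocallyLipschitz φ →
          (∀ x, φ x ∈ Set.Icc (0 : ℝ) 1) →
          μ {x | φ x = 0} ≥ 1 / 2 → μ {x | φ x = 1} ≥ ENNReal.ofReal a →
          ∫⁻ x, ENNReal.ofReal (‖fderiv ℝ φ x‖ ^ 2) ∂μ ≥
            ENNReal.ofReal (c₁ * (n : ℝ) ^ ((2 : ℝ) / p) * a *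
              (Real.log (1 / a)) ^ (2 - 2 / p)) := by
  refine ⟨c ^ 2 / 256, by positivity, ?_⟩
  intro n _ p hp1 _ μ _ hL1 a ha ha2 φ hφ hmem h0 h1
  set G : ℝ → ℝ := fun a => c * (n : ℝ) ^ ((1 : ℝ) / p) * Real.log (1 / a) ^ (1 - 1 / p)
  have hlog : ∀ a ∈ Ioo (0 : ℝ) (1 / 2), 0 ≤ Real.log (1 / a) := fun a ha =>
    Real.log_nonneg (by rw [le_div_iff₀ ha.1]; linarith [ha.2])
  have hG : ∀ a ∈ Ioo (0 : ℝ) (1 / 256), G a ≤ 2 * G (16 * a) := fun a ha => by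
    have hr0 : 0 ≤ 1 - 1 / p := by rw [sub_nonneg, div_le_one₀ (by linarith)]; exact hp1
    have hr1 : 1 - 1 / p ≤ 1 := sub_le_self 1 (by positivity)
    have hcn : 0 ≤ c * (n : ℝ) ^ ((1 : ℝ) / p) := by positivity
    have := mul_le_mul_of_nonneg_left (log_one_div_rpow_le_two_mul hr0 hr1 ha.1 ha.2.le) hcn
    simp only [G]
    linarith
  have h := L1CapacityInequality.ofReal_le_lintegral_sq_fderiv
    (fun a ha ψ hψ => (congrArg ENNReal.ofReal (by ring)).trans_le
      (hL1 a ha.1 ha.2 ψ hψ.1 hψ.2 hψ.3 hψ.4))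
    (fun a ha => by have := hlog a ha; positivity) hG ⟨ha, ha2⟩ ⟨hφ, hmem, h0, h1⟩
  have hsq : G a ^ 2 = c ^ 2 * (n : ℝ) ^ ((2 : ℝ) / p) * Real.log (1 / a) ^ (2 - 2 / p) := by
    simp only [G, mul_pow, ← Real.rpow_mul_natCast (Nat.cast_nonneg n),
      ← Real.rpow_mul_natCast (hlog a ⟨ha, ha2⟩)]
    ring_nf
  rw [hsq] at h
  convert h using 2
  ring
end
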